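/- arXiv:1701.02516 — 2 statements merged into one kernel-verified Lean document; each statement's English description precedes it below -/
import Mathlib

section
/- Schur polynomial of a sum of two alphabets: let λ be a partition with at most l parts. Then in the variables x_1, …, x_m, y_1, …, y_n: s_λ(x_1, …, x_m, y_1, …, y_n) = Σ_{μ ⊆ λ} s_μ(x_1, …, x_m) · s_{λ/μ}(y_1, …, y_n), where the sum ranges over all partitions μ contained in λ. -/
open MvPolynomial

open scoped Classical

/-- The complete homogeneous symmetric polynomial `h_k` indexed by an integer,
with the convention `h_0 = 1` and `h_k = 0` for `k < 0`. -/
noncomputable def hInt (σ : Type*) [Fintype σ] [DecidableEq σ] (R : Type*) [CommRing R]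
    (k : ℤ) : MvPolynomial σ R :=
  if 0 ≤ k then hsymm σ R k.toNat else 0

/-- The Jacobi–Trudi polynomial `s_α = det (h_{α_i + j - i})` of an arbitrary integer
sequence `α`, in the variables indexed by `σ`. -/
noncomputable def jacobiTrudi (σ : Type*) [Fintype σ] [DecidableEq σ] (R : Type*) [CommRing R]
    {l : ℕ} (α : Fin l → ℤ) : MvPolynomial σ R :=
  Matrix.det (Matrix.of fun i j : Fin l => hInt σ R (α i + (j : ℕ) - (i : ℕ)))

/-- The skew Schur polynomial `s_{λ/μ} = det (h_{λ_i - μ_j + j - i})`. -/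
noncomputable def skewJacobiTrudi (σ : Type*) [Fintype σ] [DecidableEq σ] (R : Type*)
    [CommRing R] {l : ℕ} (lam μ : Fin l → ℕ) : MvPolynomial σ R :=
  Matrix.det (Matrix.of fun i j : Fin l =>
    hInt σ R ((lam i : ℤ) - (μ j : ℤ) + (j : ℕ) - (i : ℕ)))

section Helpers

open Finset Function Matrix Equiv Equiv.Perm

set_option linter.unusedSectionVars false

variable {σ τ : Type*} [Fintype σ] [Fintype τ] [DecidableEq σ] [DecidableEq τ]

private theorem filterMap_add' {α β : Type*} (f : α → Option β) (s t : Multiset α) :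
    (s + t).filterMap f = s.filterMap f + t.filterMap f := by
  induction s using Multiset.induction_on with
  | empty => simp
  | cons a s ih =>
    rw [Multiset.cons_add]
    rcases h : f a with _ | b
    · rw [Multiset.filterMap_cons_none _ _ h, Multiset.filterMap_cons_none _ _ h, ih]
    · rw [Multiset.filterMap_cons_some _ _ _ h, Multiset.filterMap_cons_some _ _ _ h, ih,
        Multiset.cons_add]

private theorem card_filterMap_left_add_right (s : Multiset (σ ⊕ τ)) :
    (s.filterMap Sum.getLeft?).card + (s.filterMap Sum.getRight?).card = s.card := by
  induction s using Multiset.induction_on with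
  | empty => simp
  | cons a s ih =>
    cases a with
    | inl a =>
      rw [Multiset.filterMap_cons_some _ _ _ (rfl : Sum.getLeft? (Sum.inl a) = some a),
        Multiset.filterMap_cons_none _ _ (rfl : Sum.getRight? (Sum.inl (β := τ) a) = none)]
      simp only [Multiset.card_cons]
      omega
    | inr b =>
      rw [Multiset.filterMap_cons_none _ _ (rfl : Sum.getLeft? (Sum.inr (α := σ) b) = none),
        Multiset.filterMap_cons_some _ _ _ (rfl : Sum.getRight? (Sum.inr (α := σ) b) = some b)]
      simp only [Multiset.card_cons]
      omega

private theorem reconstruct (s : Multiset (σ ⊕ τ)) :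
    (s.filterMap Sum.getLeft?).map Sum.inl + (s.filterMap Sum.getRight?).map Sum.inr = s := by
  induction s using Multiset.induction_on with
  | empty => simp
  | cons a s ih =>
    cases a with
    | inl a =>
      rw [Multiset.filterMap_cons_some _ _ _ (rfl : Sum.getLeft? (Sum.inl a) = some a),
        Multiset.filterMap_cons_none _ _ (rfl : Sum.getRight? (Sum.inl (β := τ) a) = none),
        Multiset.map_cons, Multiset.cons_add, ih]
    | inr b =>
      rw [Multiset.filterMap_cons_none _ _ (rfl : Sum.getLeft? (Sum.inr (α := σ) b) = none),
        Multiset.filterMap_cons_some _ _ _ (rfl : Sum.getRight? (Sum.inr (α := σ) b) = some b),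
        Multiset.map_cons, Multiset.add_cons, ih]

private theorem filterMap_left_mk (u : Multiset σ) (v : Multiset τ) :
    (u.map Sum.inl + v.map Sum.inr).filterMap (Sum.getLeft? (β := τ)) = u := by
  rw [filterMap_add', Multiset.filterMap_map, Multiset.filterMap_map]
  have h1 : (Sum.getLeft? (β := τ)) ∘ (Sum.inl : σ → σ ⊕ τ) = some ∘ id := rfl
  have h2 : (Sum.getLeft? (β := τ)) ∘ (Sum.inr : τ → σ ⊕ τ) = fun _ => none := rfl
  rw [h1, h2, Multiset.filterMap_eq_map]
  simp [Multiset.filterMap_cons_none]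
  induction v using Multiset.induction_on with
  | empty => simp
  | cons a s ih => rw [Multiset.filterMap_cons_none _ _ rfl]; exact ih

private theorem filterMap_right_mk (u : Multiset σ) (v : Multiset τ) :
    (u.map Sum.inl + v.map Sum.inr).filterMap (Sum.getRight? (α := σ)) = v := by
  rw [filterMap_add', Multiset.filterMap_map, Multiset.filterMap_map]
  have h1 : (Sum.getRight? (α := σ)) ∘ (Sum.inr : τ → σ ⊕ τ) = some ∘ id := rfl
  have h2 : (Sum.getRight? (α := σ)) ∘ (Sum.inl : σ → σ ⊕ τ) = fun _ => none := rfl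
  rw [h1, h2, Multiset.filterMap_eq_map]
  have : (Multiset.filterMap (fun _ => (none : Option τ)) u) = 0 := by
    induction u using Multiset.induction_on with
    | empty => simp
    | cons a s ih => rw [Multiset.filterMap_cons_none _ _ rfl]; exact ih
  rw [this]
  simp

theorem hsymm_sum_alphabets (R : Type*) [CommRing R] (K : ℕ) :
    hsymm (σ ⊕ τ) R K = ∑ e ∈ Finset.range (K + 1),
      rename Sum.inl (hsymm σ R (K - e)) * rename Sum.inr (hsymm τ R e) := by
  have expand : ∀ (e : ℕ),
      rename (Sum.inl : σ → σ ⊕ τ) (hsymm σ R (K - e)) *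
        rename (Sum.inr : τ → σ ⊕ τ) (hsymm τ R e)
      = ∑ x : Sym σ (K - e) × Sym τ e,
          ((x.1.1.map (fun i => (X (Sum.inl i) : MvPolynomial (σ ⊕ τ) R))).prod *
           (x.2.1.map (fun i => X (Sum.inr i))).prod) := by
    intro e
    rw [hsymm, hsymm, map_sum, map_sum, Finset.sum_mul_sum, ← Fintype.sum_prod_type']
    refine Finset.sum_congr rfl fun x _ => ?_
    rw [map_multiset_prod, map_multiset_prod, Multiset.map_map, Multiset.map_map]
    simp [Function.comp_def]
  have main : ∑ x ∈ (Finset.range (K + 1)).sigma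
        (fun e => (Finset.univ : Finset (Sym σ (K - e) × Sym τ e))),
      ((x.2.1.1.map (fun i => (X (Sum.inl i) : MvPolynomial (σ ⊕ τ) R))).prod *
        (x.2.2.1.map (fun i => X (Sum.inr i))).prod)
      = ∑ s : Sym (σ ⊕ τ) K, (Multiset.map X s.1).prod := by
    refine Finset.sum_bij
      (fun x hx => (⟨x.2.1.1.map Sum.inl + x.2.2.1.map Sum.inr, ?_⟩ : Sym (σ ⊕ τ) K))
      ?_ ?_ ?_ ?_
    · have he : x.1 ≤ K :=
        Nat.lt_succ_iff.1 (Finset.mem_range.1 (Finset.mem_sigma.1 hx).1)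
      simp [x.2.1.2, x.2.2.2, Nat.sub_add_cancel he]
    · intro a ha; exact Finset.mem_univ _
    · rintro ⟨e, u, v⟩ hx ⟨e', u', v'⟩ hy h
      have h' : u.1.map Sum.inl + v.1.map Sum.inr = u'.1.map Sum.inl + v'.1.map Sum.inr :=
        congrArg Subtype.val h
      have hv : v.1 = v'.1 := by
        have := congrArg (Multiset.filterMap (Sum.getRight? (α := σ))) h'
        rwa [filterMap_right_mk, filterMap_right_mk] at this
      have hu : u.1 = u'.1 := by
        have := congrArg (Multiset.filterMap (Sum.getLeft? (β := τ))) h'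
        rwa [filterMap_left_mk, filterMap_left_mk] at this
      have he : e = e' := by rw [← v.2, ← v'.2, hv]
      subst he
      have hu2 : u = u' := Subtype.ext hu
      have hv2 : v = v' := Subtype.ext hv
      rw [hu2, hv2]
    · intro s _
      have hc := card_filterMap_left_add_right s.1
      rw [s.2] at hc
      have he : (s.1.filterMap Sum.getRight?).card ≤ K := by omega
      refine ⟨⟨(s.1.filterMap Sum.getRight?).card,
          ⟨s.1.filterMap Sum.getLeft?, by omega⟩,
          ⟨s.1.filterMap Sum.getRight?, rfl⟩⟩,
        Finset.mem_sigma.2 ⟨Finset.mem_range.2 (Nat.lt_succ_of_le he), Finset.mem_univ _⟩, ?_⟩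
      exact Subtype.ext (reconstruct s.1)
    · rintro ⟨e, u, v⟩ hx
      show _ = (Multiset.map X (u.1.map Sum.inl + v.1.map Sum.inr)).prod
      rw [Multiset.map_add, Multiset.prod_add, Multiset.map_map, Multiset.map_map]
      rfl
  rw [hsymm, ← main, Finset.sum_sigma]
  exact Finset.sum_congr rfl fun e he => (expand e).symm


theorem cauchyBinet {R : Type*} [CommRing R] {l : ℕ} {S : Type*} [Fintype S]
    [LinearOrder S] (A : Matrix (Fin l) S R) (B : Matrix S (Fin l) R) :
    (A * B).det = ∑ f ∈ Finset.univ.filter (fun f : Fin l → S => StrictMono f),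
      (A.submatrix id f).det * (B.submatrix f id).det := by
  have step1 : (A * B).det
      = ∑ p : Fin l → S, ∑ σ : Perm (Fin l),
          ((Perm.sign σ : ℤ) : R) * ∏ i, A (σ i) (p i) * B (p i) i := by
    simp only [det_apply', Matrix.mul_apply, prod_univ_sum, mul_sum, Fintype.piFinset_univ]
    rw [Finset.sum_comm]
  have step2 : ∀ p : Fin l → S,
      (∑ σ : Perm (Fin l), ((Perm.sign σ : ℤ) : R) * ∏ i, A (σ i) (p i) * B (p i) i)
        = (∏ i, B (p i) i) * (A.submatrix id p).det := by
    intro p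
    rw [det_apply', Finset.mul_sum]
    refine Finset.sum_congr rfl fun σ _ => ?_
    simp only [Matrix.submatrix_apply, id_eq, Finset.prod_mul_distrib]
    ring
  rw [step1]
  simp_rw [step2]
  rw [← Finset.sum_filter_add_sum_filter_not Finset.univ
      (fun p : Fin l → S => Function.Injective p)]
  have hnot : ∑ p ∈ Finset.univ.filter (fun p : Fin l → S => ¬ Function.Injective p),
      (∏ i, B (p i) i) * (A.submatrix id p).det = 0 := by
    refine Finset.sum_eq_zero fun p hp => ?_
    have hpne : ¬ Function.Injective p := (Finset.mem_filter.1 hp).2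
    obtain ⟨i, j, hij, hne⟩ := Function.not_injective_iff.1 hpne
    rw [Matrix.det_zero_of_column_eq hne (fun k => by simp [hij]), mul_zero]
  rw [hnot, add_zero]
  -- bijection between injective maps and pairs (strict mono, perm)
  rw [show (Finset.univ.filter (fun f : Fin l → S => StrictMono f)) = _ from rfl]
  symm
  have key : ∀ (f : Fin l → S), StrictMono f →
      (A.submatrix id f).det * (B.submatrix f id).det
        = ∑ π : Perm (Fin l), (∏ i, B ((f ∘ π) i) i) * (A.submatrix id (f ∘ π)).det := by
    intro f hf
    have h1 : ∀ π : Perm (Fin l),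
        (A.submatrix id (f ∘ π)).det = ((Perm.sign π : ℤ) : R) * (A.submatrix id f).det := by
      intro π
      have : A.submatrix id (f ∘ π) = (A.submatrix id f).submatrix id π := rfl
      rw [this, Matrix.det_permute']
    simp_rw [h1]
    rw [det_apply' (B.submatrix f id), Finset.mul_sum]
    refine Finset.sum_congr rfl fun π _ => ?_
    simp only [Matrix.submatrix_apply, id_eq, Function.comp_apply]
    ring
  calc ∑ f ∈ Finset.univ.filter (fun f : Fin l → S => StrictMono f),
        (A.submatrix id f).det * (B.submatrix f id).det
      = ∑ x ∈ (Finset.univ.filter (fun f : Fin l → S => StrictMono f)) ×ˢ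
            (Finset.univ : Finset (Perm (Fin l))),
          (∏ i, B ((x.1 ∘ x.2) i) i) * (A.submatrix id (x.1 ∘ x.2)).det := by
        rw [Finset.sum_product]
        exact Finset.sum_congr rfl fun f hf => key f (Finset.mem_filter.1 hf).2
    _ = ∑ p ∈ Finset.univ.filter (fun p : Fin l → S => Function.Injective p),
          (∏ i, B (p i) i) * (A.submatrix id p).det := by
        refine Finset.sum_bij (fun x _ => x.1 ∘ x.2) ?_ ?_ ?_ ?_
        · rintro ⟨f, π⟩ hx
          have hf : StrictMono f := (Finset.mem_filter.1 (Finset.mem_product.1 hx).1).2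
          exact Finset.mem_filter.2 ⟨Finset.mem_univ _, hf.injective.comp π.injective⟩
        · rintro ⟨f₁, π₁⟩ hx ⟨f₂, π₂⟩ hy h
          have hf₁ : StrictMono f₁ := (Finset.mem_filter.1 (Finset.mem_product.1 hx).1).2
          have hf₂ : StrictMono f₂ := (Finset.mem_filter.1 (Finset.mem_product.1 hy).1).2
          have h' : f₁ ∘ ⇑π₁ = f₂ ∘ ⇑π₂ := h
          haveI : WellFoundedLT (Fin l) := Finite.to_wellFoundedLT
          have hr : Set.range f₁ = Set.range f₂ := by
            rw [← π₁.surjective.range_comp f₁, ← π₂.surjective.range_comp f₂, h']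
          have hff : f₁ = f₂ := (hf₁.range_inj hf₂).1 hr
          subst hff
          have hpp : π₁ = π₂ :=
            Equiv.coe_fn_injective (funext fun i => hf₁.injective (congrFun h' i))
          simp [hpp]
        · intro p hp
          have hpi : Function.Injective p := (Finset.mem_filter.1 hp).2
          set T : Finset S := Finset.image p Finset.univ with hT
          have hTc : T.card = l := by
            rw [hT, Finset.card_image_of_injective _ hpi, Finset.card_univ, Fintype.card_fin]
          refine ⟨⟨T.orderEmbOfFin hTc, Equiv.ofBijective
              (fun i => (T.orderIsoOfFin hTc).symm
                ⟨p i, Finset.mem_image_of_mem _ (Finset.mem_univ i)⟩) ?_⟩, ?_, ?_⟩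
          · rw [← Finite.injective_iff_bijective]
            intro i j hij
            have := congrArg (fun x => ((T.orderIsoOfFin hTc) x : S)) hij
            simp only [OrderIso.apply_symm_apply] at this
            exact hpi this
          · refine Finset.mem_product.2 ⟨Finset.mem_filter.2 ⟨Finset.mem_univ _, ?_⟩,
              Finset.mem_univ _⟩
            exact (T.orderEmbOfFin hTc).strictMono
          · funext i
            simp only [Function.comp_apply, Equiv.ofBijective_apply]
            rw [← Finset.coe_orderIsoOfFin_apply, OrderIso.apply_symm_apply]
        · rintro ⟨f, π⟩ hx
          rfl


theorem hInt_of_neg {σ : Type*} [Fintype σ] [DecidableEq σ] {R : Type*} [CommRing R]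
    {k : ℤ} (h : k < 0) : hInt σ R k = 0 := by
  rw [hInt, if_neg (by omega)]

theorem hInt_add_split {σ τ : Type*} [Fintype σ] [Fintype τ] [DecidableEq σ] [DecidableEq τ]
    (R : Type*) [CommRing R] (a b : ℤ) (S : Finset ℤ) (hS : Finset.Icc (-a) b ⊆ S) :
    hInt (σ ⊕ τ) R (a + b) = ∑ c ∈ S,
      rename Sum.inl (hInt σ R (b - c)) * rename Sum.inr (hInt τ R (a + c)) := by
  have hzero : ∀ c ∈ S, c ∉ Finset.Icc (-a) b →
      rename Sum.inl (hInt σ R (b - c)) * rename (Sum.inr (α := σ)) (hInt τ R (a + c)) = 0 := by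
    intro c _ hc
    rw [Finset.mem_Icc] at hc
    rcases lt_or_ge c (-a) with h | h
    · rw [hInt_of_neg (show a + c < 0 by omega), map_zero, mul_zero]
    · rw [hInt_of_neg (show b - c < 0 by omega), map_zero, zero_mul]
  rw [← Finset.sum_subset hS hzero]
  rcases lt_or_ge (a + b) 0 with hab | hab
  · rw [hInt_of_neg hab, Finset.Icc_eq_empty (by omega), Finset.sum_empty]
  · set K := (a + b).toNat with hK
    have hKab : (K : ℤ) = a + b := Int.toNat_of_nonneg hab
    rw [hInt, if_pos hab, ← hK, hsymm_sum_alphabets]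
    refine Finset.sum_bij (fun e _ => -a + (e : ℤ)) ?_ ?_ ?_ ?_
    · intro e he
      rw [Finset.mem_range] at he
      show -a + (e : ℤ) ∈ Finset.Icc (-a) b
      rw [Finset.mem_Icc]
      omega
    · intro e he e' he' h
      have h' : -a + (e : ℤ) = -a + (e' : ℤ) := h
      omega
    · intro c hc
      rw [Finset.mem_Icc] at hc
      refine ⟨(a + c).toNat, Finset.mem_range.2 (by omega), ?_⟩
      show -a + (((a + c).toNat : ℕ) : ℤ) = c
      omega
    · intro e he
      rw [Finset.mem_range] at he
      show _ = rename Sum.inl (hInt σ R (b - (-a + (e : ℤ)))) *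
          rename (Sum.inr (α := σ)) (hInt τ R (a + (-a + (e : ℤ))))
      have h1 : hInt σ R (b - (-a + (e : ℤ))) = hsymm σ R (K - e) := by
        have hx : b - (-a + (e : ℤ)) = ((K - e : ℕ) : ℤ) := by omega
        rw [hx, hInt, if_pos (Int.natCast_nonneg _), Int.toNat_natCast]
      have h2 : hInt τ R (a + (-a + (e : ℤ))) = hsymm τ R e := by
        have hx : a + (-a + (e : ℤ)) = ((e : ℕ) : ℤ) := by ring
        rw [hx, hInt, if_pos (Int.natCast_nonneg _), Int.toNat_natCast]
      rw [h1, h2]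


theorem det_eq_zero_of_zero_block {R : Type*} [CommRing R] {l : ℕ}
    (M : Matrix (Fin l) (Fin l) R) (k : Fin l)
    (h : ∀ i j : Fin l, j ≤ k → k ≤ i → M i j = 0) : M.det = 0 := by
  rw [Matrix.det_apply']
  refine Finset.sum_eq_zero fun σ _ => ?_
  by_cases hσ : ∃ j : Fin l, j ≤ k ∧ k ≤ σ j
  · obtain ⟨j, hj, hkj⟩ := hσ
    refine mul_eq_zero_of_right _ ?_
    exact Finset.prod_eq_zero (Finset.mem_univ j)
      (show (fun i => M (σ i) i) j = 0 from h (σ j) j hj hkj)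
  · exfalso
    push_neg at hσ
    have hmap : ∀ j ∈ Finset.Iic k, σ j ∈ Finset.Iio k := by
      intro j hj
      rw [Finset.mem_Iio]
      exact hσ j (Finset.mem_Iic.1 hj)
    have hcard := Finset.card_le_card_of_injOn σ hmap (σ.injective.injOn)
    rw [Fin.card_Iic, Fin.card_Iio] at hcard
    omega

theorem strictMono_int_gap {l : ℕ} (g : Fin l → ℤ) (hg : StrictMono g) :
    ∀ (k k' : Fin l), k ≤ k' → (k' : ℤ) - (k : ℤ) ≤ g k' - g k := by
  suffices h : ∀ (d : ℕ) (k k' : Fin l), (k' : ℕ) = (k : ℕ) + d → (d : ℤ) ≤ g k' - g k by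
    intro k k' hkk'
    have hd : (k' : ℕ) = (k : ℕ) + ((k' : ℕ) - (k : ℕ)) := by omega
    have := h ((k' : ℕ) - (k : ℕ)) k k' hd
    omega
  intro d
  induction d with
  | zero =>
    intro k k' hk
    have : k = k' := Fin.ext (by omega)
    subst this
    omega
  | succ d ih =>
    intro k k' hk
    have hlt : (k : ℕ) + d < l := by omega
    set k'' : Fin l := ⟨(k : ℕ) + d, hlt⟩ with hk''
    have h1 := ih k k'' rfl
    have h2 : g k'' < g k' := hg (by rw [Fin.lt_def]; simp [hk'']; omega)
    push_cast
    omega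


end Helpers

/-- **Schur polynomial of a sum of two alphabets.**  For a partition `λ` with at most `l`
parts, `s_λ(x, y) = Σ_{μ ⊆ λ} s_μ(x) ⬝ s_{λ/μ}(y)`, where `x = (x_1, …, x_m)` are the
variables indexed by `Sum.inl` and `y = (y_1, …, y_n)` those indexed by `Sum.inr`. -/
theorem schur_sum_of_alphabets (R : Type*) [CommRing R] (m n l : ℕ)
    (lam : Fin l → ℕ) (hlam : Antitone lam) :
    jacobiTrudi (Fin m ⊕ Fin n) R (fun i => (lam i : ℤ)) =
      ∑ μ ∈ (Finset.Iic lam).filter (fun μ => Antitone μ),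
        rename Sum.inl (jacobiTrudi (Fin m) R (fun i => (μ i : ℤ))) *
          rename Sum.inr (skewJacobiTrudi (Fin n) R lam μ) := by
  set N : ℕ := Finset.univ.sup lam with hN
  have hlamN : ∀ i, lam i ≤ N := fun i => Finset.le_sup (Finset.mem_univ i)
  set Sf : Finset ℤ := Finset.Icc (-(N : ℤ)) ((l : ℤ) - 1) with hSf
  set A : Matrix (Fin l) ↥Sf (MvPolynomial (Fin m ⊕ Fin n) R) :=
    Matrix.of (fun i c => rename Sum.inr
      (hInt (Fin n) R ((lam i : ℤ) - ((i : ℕ) : ℤ) + (c : ℤ)))) with hA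
  set B : Matrix ↥Sf (Fin l) (MvPolynomial (Fin m ⊕ Fin n) R) :=
    Matrix.of (fun c j => rename Sum.inl
      (hInt (Fin m) R (((j : ℕ) : ℤ) - (c : ℤ)))) with hB
  have hM : (Matrix.of fun i j : Fin l =>
      hInt (Fin m ⊕ Fin n) R ((lam i : ℤ) + ((j : ℕ) : ℤ) - ((i : ℕ) : ℤ))) = A * B := by
    refine Matrix.ext fun i j => ?_
    rw [Matrix.mul_apply, Matrix.of_apply]
    have harg : (lam i : ℤ) + ((j : ℕ) : ℤ) - ((i : ℕ) : ℤ)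
        = ((lam i : ℤ) - ((i : ℕ) : ℤ)) + ((j : ℕ) : ℤ) := by ring
    rw [harg, hInt_add_split R _ _ Sf ?_]
    · have hrhs : ∑ c : ↥Sf, A i c * B c j = ∑ c ∈ Sf,
          rename (Sum.inr (α := Fin m)) (hInt (Fin n) R (((lam i : ℤ) - ((i : ℕ) : ℤ)) + c)) *
          rename Sum.inl (hInt (Fin m) R (((j : ℕ) : ℤ) - c)) :=
        Finset.sum_coe_sort Sf (fun z : ℤ =>
          rename (Sum.inr (α := Fin m)) (hInt (Fin n) R (((lam i : ℤ) - ((i : ℕ) : ℤ)) + z)) *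
          rename Sum.inl (hInt (Fin m) R (((j : ℕ) : ℤ) - z)))
      rw [hrhs]
      exact Finset.sum_congr rfl fun c _ => mul_comm _ _
    · refine Finset.Icc_subset_Icc ?_ ?_
      · have := hlamN i
        have : (0 : ℤ) ≤ ((i : ℕ) : ℤ) := Int.natCast_nonneg _
        omega
      · have := j.isLt
        omega
  rw [jacobiTrudi, hM, cauchyBinet A B]
  -- the map from partitions μ ⊆ λ to strictly monotone maps
  have hmemF : ∀ (μ : Fin l → ℕ) (k : Fin l),
      ((k : ℕ) : ℤ) - (min (μ k) N : ℕ) ∈ Sf := by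
    intro μ k
    rw [hSf, Finset.mem_Icc]
    have h1 : min (μ k) N ≤ N := min_le_right _ _
    have h2 : (k : ℕ) < l := k.isLt
    omega
  set F : (Fin l → ℕ) → Fin l → ↥Sf :=
    fun μ k => ⟨((k : ℕ) : ℤ) - (min (μ k) N : ℕ), hmemF μ k⟩ with hF
  set P : Finset (Fin l → ℕ) := (Finset.Iic lam).filter (fun μ => Antitone μ) with hP
  have hmuN : ∀ μ ∈ P, ∀ k, μ k ≤ N := by
    intro μ hμ k
    have h1 : μ ≤ lam := Finset.mem_Iic.1 (Finset.mem_filter.1 hμ).1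
    exact le_trans (h1 k) (hlamN k)
  have hFP : ∀ μ ∈ P, StrictMono (F μ) := by
    intro μ hμ
    have hanti : Antitone μ := (Finset.mem_filter.1 hμ).2
    intro k k' hkk'
    rw [hF, Subtype.mk_lt_mk]
    have h1 : μ k' ≤ μ k := hanti (le_of_lt hkk')
    have h2 : (k : ℕ) < (k' : ℕ) := hkk'
    have h3 : min (μ k) N ≤ μ k := min_le_left _ _
    have h4 : min (μ k') N ≤ min (μ k) N := by
      have := hmuN μ hμ k; have := hmuN μ hμ k'
      omega
    omega
  have himg : Finset.image F P ⊆ Finset.univ.filter (fun f : Fin l → ↥Sf => StrictMono f) := by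
    intro f hf
    obtain ⟨μ, hμ, rfl⟩ := Finset.mem_image.1 hf
    exact Finset.mem_filter.2 ⟨Finset.mem_univ _, hFP μ hμ⟩
  have hz : ∀ f ∈ Finset.univ.filter (fun f : Fin l → ↥Sf => StrictMono f),
      f ∉ Finset.image F P →
      (A.submatrix id f).det * (B.submatrix f id).det = 0 := by
    intro f hf hfim
    have hsm : StrictMono f := (Finset.mem_filter.1 hf).2
    set c : Fin l → ℤ := fun k => ((f k : ℤ)) with hc
    have hcsm : StrictMono c := fun k k' h => by
      rw [hc]
      exact_mod_cast hsm h
    have hgap := strictMono_int_gap c hcsm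
    by_cases hcase1 : ∃ k : Fin l, ((k : ℕ) : ℤ) - c k < 0
    · -- det B = 0
      obtain ⟨k, hk⟩ := hcase1
      refine mul_eq_zero_of_right _ (det_eq_zero_of_zero_block _ k ?_)
      intro i j hji hki
      have hgap' := hgap k i hki
      have hji' : (j : ℕ) ≤ (k : ℕ) := hji
      have hki' : (k : ℕ) ≤ (i : ℕ) := hki
      show rename Sum.inl (hInt (Fin m) R (((j : ℕ) : ℤ) - c i)) = 0
      rw [hInt_of_neg (by omega), map_zero]
    by_cases hcase2 : ∃ k : Fin l, (lam k : ℤ) < ((k : ℕ) : ℤ) - c k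
    · -- det A = 0
      obtain ⟨k, hk⟩ := hcase2
      refine mul_eq_zero_of_left (det_eq_zero_of_zero_block _ k ?_) _
      intro i j hji hki
      have hgap' := hgap j k hji
      have hlami : lam i ≤ lam k := hlam hki
      have hji' : (j : ℕ) ≤ (k : ℕ) := hji
      have hki' : (k : ℕ) ≤ (i : ℕ) := hki
      show rename Sum.inr (hInt (Fin n) R ((lam i : ℤ) - ((i : ℕ) : ℤ) + c j)) = 0
      rw [hInt_of_neg (by omega), map_zero]
    · -- f is in the image: contradiction
      exfalso
      push_neg at hcase1 hcase2
      set μ : Fin l → ℕ := fun k => (((k : ℕ) : ℤ) - c k).toNat with hμdef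
      have hμval : ∀ k, ((μ k : ℕ) : ℤ) = ((k : ℕ) : ℤ) - c k := by
        intro k
        rw [hμdef]
        exact Int.toNat_of_nonneg (by have := hcase1 k; omega)
      have hμlam : ∀ k, μ k ≤ lam k := by
        intro k
        have h1 := hcase2 k
        have h2 := hμval k
        omega
      have hμP : μ ∈ P := by
        refine Finset.mem_filter.2 ⟨Finset.mem_Iic.2 ?_, ?_⟩
        · intro k; exact hμlam k
        · intro k k' hkk'
          have hgap' := hgap k k' hkk'
          have h1 := hμval k
          have h2 := hμval k'
          omega
      refine hfim (Finset.mem_image.2 ⟨μ, hμP, ?_⟩)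
      funext k
      refine Subtype.ext ?_
      show ((k : ℕ) : ℤ) - (min (μ k) N : ℕ) = c k
      have h1 : min (μ k) N = μ k := min_eq_left (le_trans (hμlam k) (hlamN k))
      have h2 := hμval k
      rw [h1]
      omega
  rw [← Finset.sum_subset himg hz, Finset.sum_image ?hinj]
  case hinj =>
    intro μ hμ μ' hμ' h
    funext k
    have h1 : ((k : ℕ) : ℤ) - (min (μ k) N : ℕ) = ((k : ℕ) : ℤ) - (min (μ' k) N : ℕ) :=
      congrArg Subtype.val (congrFun h k)
    have h2 := hmuN μ hμ k
    have h3 := hmuN μ' hμ' k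
    omega
  refine Finset.sum_congr rfl fun μ hμ => ?_
  have hmin : ∀ k, min (μ k) N = μ k := fun k => min_eq_left (le_trans
    ((Finset.mem_Iic.1 (Finset.mem_filter.1 hμ).1) k) (hlamN k))
  have hAeq : A.submatrix id (F μ) = (Matrix.of fun i j : Fin l =>
      hInt (Fin n) R ((lam i : ℤ) - (μ j : ℤ) + ((j : ℕ) : ℤ) - ((i : ℕ) : ℤ))).map
        (rename Sum.inr) := by
    refine Matrix.ext fun i j => ?_
    have harg : (lam i : ℤ) - ((i : ℕ) : ℤ) + (((j : ℕ) : ℤ) - ((min (μ j) N : ℕ) : ℤ))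
        = (lam i : ℤ) - (μ j : ℤ) + ((j : ℕ) : ℤ) - ((i : ℕ) : ℤ) := by
      rw [hmin j]; ring
    show rename Sum.inr (hInt (Fin n) R
        ((lam i : ℤ) - ((i : ℕ) : ℤ) + (((j : ℕ) : ℤ) - ((min (μ j) N : ℕ) : ℤ))))
      = rename Sum.inr (hInt (Fin n) R
        ((lam i : ℤ) - (μ j : ℤ) + ((j : ℕ) : ℤ) - ((i : ℕ) : ℤ)))
    rw [harg]
  have hBeq : B.submatrix (F μ) id = (Matrix.of fun i j : Fin l =>
      hInt (Fin m) R ((μ i : ℤ) + ((j : ℕ) : ℤ) - ((i : ℕ) : ℤ))).map (rename Sum.inl) := by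
    refine Matrix.ext fun i j => ?_
    have harg : ((j : ℕ) : ℤ) - (((i : ℕ) : ℤ) - ((min (μ i) N : ℕ) : ℤ))
        = (μ i : ℤ) + ((j : ℕ) : ℤ) - ((i : ℕ) : ℤ) := by
      rw [hmin i]; ring
    show rename Sum.inl (hInt (Fin m) R
        (((j : ℕ) : ℤ) - (((i : ℕ) : ℤ) - ((min (μ i) N : ℕ) : ℤ))))
      = rename Sum.inl (hInt (Fin m) R ((μ i : ℤ) + ((j : ℕ) : ℤ) - ((i : ℕ) : ℤ)))
    rw [harg]
  rw [hAeq, hBeq, ← AlgHom.mapMatrix_apply, ← AlgHom.mapMatrix_apply,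
    ← AlgHom.map_det, ← AlgHom.map_det]
  rw [mul_comm]
  rfl
end

section
/- Schur polynomial at an alphabet minus one letter (cancellation form of Corollary 1.2): let λ be a partition. Then in the variables x_1, …, x_m, y: Σ_μ (−y)^{|λ| − |μ|} · s_μ(x_1, …, x_m, y) = s_λ(x_1, …, x_m), where the sum ranges over all partitions μ ⊆ λ such that λ/μ is a vertical strip. (This identity expresses that s_λ[(X + y) − y] = s_λ[X]: removing a single letter from an alphabet corresponds to an alternating sum over vertical strips.) -/
open MvPolynomial

open scoped Classical

/-- `λ/μ` is a vertical strip: `λ_i - μ_i ∈ {0, 1}` for every `i`. -/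
def IsVerticalStrip {l : ℕ} (lam μ : Fin l → ℕ) : Prop :=
  ∀ i, μ i ≤ lam i ∧ lam i ≤ μ i + 1

/-!
Over the alphabet `X + y`, `h_k(X) = h_k(X + y) - y h_{k-1}(X + y)`. Substituting this into every
entry of the Jacobi–Trudi matrix of `λ` and expanding the determinant row by row gives
`s_λ(X) = Σ_ε (-y)^{|ε|} s_{λ - ε}(X + y)` over all `ε ∈ {0,1}^l`. Since `λ` is a partition, a
sequence `λ - ε` that is not a partition either rises by exactly one between two consecutive
rows, which makes two rows of its Jacobi–Trudi matrix equal, or ends in `-1`, which makes the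
last row vanish. The surviving `λ - ε` are exactly the partitions `μ` with `λ/μ` a vertical strip.
-/

section hInt

variable {σ : Type*} [Fintype σ] [DecidableEq σ] {R : Type*} [CommRing R]

theorem hInt_natCast (k : ℕ) : hInt σ R k = hsymm σ R k := by
  simp [hInt]

theorem hInt_of_neg_s10 {k : ℤ} (hk : k < 0) : hInt σ R k = 0 :=
  if_neg hk.not_ge

end hInt

-- A multiset of size `k + 1` on `Option σ` either contains `none`, which can be removed,
-- or lives on `σ`.
theorem hsymm_option_succ (σ : Type*) [Fintype σ] [DecidableEq σ] (R : Type*) [CommRing R]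
    (k : ℕ) :
    hsymm (Option σ) R (k + 1)
      = rename some (hsymm σ R (k + 1)) + X none * hsymm (Option σ) R k := by
  rw [hsymm, ← Equiv.sum_comp (symOptionSuccEquiv (α := σ) (n := k)).symm,
    Fintype.sum_sum_type, add_comm]
  congr 1
  · rw [hsymm, map_sum]
    refine Finset.sum_congr rfl fun s _ => ?_
    change ((s.map Function.Embedding.some).1.map X).prod = _
    rw [Sym.map, Multiset.map_map]
    simp [← Multiset.prod_hom', Function.comp_def]
  · rw [hsymm, Finset.mul_sum]
    refine Finset.sum_congr rfl fun s _ => ?_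
    change (((none ::ₛ s) : Sym (Option σ) (k + 1)).1.map X).prod = _
    rw [Sym.cons, Multiset.map_cons, Multiset.prod_cons]

theorem rename_castSucc_hInt (R : Type*) [CommRing R] (m : ℕ) (k : ℤ) :
    rename Fin.castSucc (hInt (Fin m) R k)
      = hInt (Fin (m + 1)) R k - X (Fin.last m) * hInt (Fin (m + 1)) R (k - 1) := by
  rcases lt_or_ge k 0 with hk | hk
  · simp [hInt_of_neg_s10 hk, hInt_of_neg_s10 (show k - 1 < 0 by omega)]
  obtain ⟨j, rfl⟩ := Int.eq_ofNat_of_zero_le hk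
  cases j with
  | zero => simp [hInt]
  | succ j =>
    have hsymm_fin (n : ℕ) : hsymm (Fin (m + 1)) R n
        = rename finSuccEquivLast.symm (hsymm (Option (Fin m)) R n) :=
      (rename_hsymm _ R n _).symm
    rw [show ((j + 1 : ℕ) : ℤ) - 1 = j by omega, hInt_natCast, hInt_natCast, hInt_natCast,
      hsymm_fin, hsymm_fin, hsymm_option_succ, map_add, map_mul, rename_rename, rename_X,
      finSuccEquivLast_symm_none, add_sub_cancel_right]
    congr 2
    ext i
    simp

theorem det_of_sum_mul {n β R : Type*} [Fintype n] [DecidableEq n] [Fintype β] [CommRing R]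
    (c : n → β → R) (A : n → β → n → R) :
    (Matrix.of fun i j => ∑ b, c i b * A i b j).det
      = ∑ f : n → β, (∏ i, c i (f i)) * (Matrix.of fun i j => A i (f i) j).det := by
  have hrows : (Matrix.of fun i j => ∑ b, c i b * A i b j) = fun i => ∑ b, c i b • A i b := by
    ext i j
    simp [Finset.sum_apply]
  rw [hrows]
  change (Matrix.detRowAlternating (R := R)).toMultilinearMap _ = _
  rw [MultilinearMap.map_sum]
  refine Finset.sum_congr rfl fun f _ => ?_
  exact (Matrix.detRowAlternating).toMultilinearMap.map_smul_univ _ _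

theorem rename_castSucc_jacobiTrudi (R : Type*) [CommRing R] (m : ℕ) {l : ℕ} (α : Fin l → ℤ) :
    rename Fin.castSucc (jacobiTrudi (Fin m) R α)
      = ∑ ε : Fin l → Bool, (-X (Fin.last m)) ^ (∑ i, (ε i).toNat) *
          jacobiTrudi (Fin (m + 1)) R (fun i => α i - (ε i).toNat) := by
  have hentry (k : ℤ) : rename Fin.castSucc (hInt (Fin m) R k)
      = ∑ b : Bool, (-X (Fin.last m)) ^ b.toNat * hInt (Fin (m + 1)) R (k - b.toNat) := by
    rw [rename_castSucc_hInt, Fintype.sum_bool]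
    simp only [Bool.toNat_true, Bool.toNat_false, pow_one, pow_zero, Nat.cast_one, Nat.cast_zero,
      sub_zero, one_mul, neg_mul]
    ring
  have hmatrix : (rename Fin.castSucc).mapMatrix
        (Matrix.of fun i j : Fin l => hInt (Fin m) R (α i + (j : ℕ) - (i : ℕ)))
      = Matrix.of fun i (j : Fin l) => ∑ b : Bool, (-X (Fin.last m)) ^ b.toNat *
          hInt (Fin (m + 1)) R (α i - b.toNat + (j : ℕ) - (i : ℕ)) := by
    ext i j : 1
    rw [AlgHom.mapMatrix_apply, Matrix.map_apply, Matrix.of_apply, Matrix.of_apply, hentry]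
    refine Finset.sum_congr rfl fun b _ => ?_
    ring_nf
  rw [jacobiTrudi, AlgHom.map_det, hmatrix, det_of_sum_mul]
  refine Finset.sum_congr rfl fun ε _ => ?_
  rw [Finset.prod_pow_eq_pow_sum, jacobiTrudi]

section vanishing

variable (σ : Type*) [Fintype σ] [DecidableEq σ] (R : Type*) [CommRing R] {l : ℕ} (α : Fin l → ℤ)

theorem jacobiTrudi_eq_zero_of_succ_eq {i j : Fin l} (hij : (j : ℕ) = i + 1)
    (h : α j = α i + 1) : jacobiTrudi σ R α = 0 := by
  refine Matrix.det_zero_of_row_eq (i := i) (j := j) (fun e => by simp [e] at hij) ?_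
  ext k : 1
  simp only [Matrix.of_apply, h, hij]
  congr 1
  push_cast
  ring

theorem jacobiTrudi_eq_zero_of_add_le (i : Fin l) (h : α i + l ≤ i) : jacobiTrudi σ R α = 0 :=
  Matrix.det_eq_zero_of_row_eq_zero i fun j => hInt_of_neg_s10 (by have := j.isLt; omega)

end vanishing

section strips

variable {l : ℕ} {lam : Fin l → ℕ}

theorem antitone_sub_of_forall_succ_ne (hlam : Antitone lam) (ε : Fin l → Bool)
    (h : ∀ i j : Fin l, (j : ℕ) = i + 1 →
      (lam j : ℤ) - (ε j).toNat ≠ (lam i : ℤ) - (ε i).toNat + 1) :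
    Antitone fun i => (lam i : ℤ) - (ε i).toNat := by
  cases l with
  | zero => exact fun i => i.elim0
  | succ n =>
    refine Fin.antitone_iff_succ_le.mpr fun i => ?_
    have hstep := h i.castSucc i.succ (by simp)
    have hle := hlam (Fin.castSucc_le_succ i)
    have := (ε i.succ).toNat_le
    have := (ε i.castSucc).toNat_le
    omega

theorem antitone_sub_and_toNat_le_of_jacobiTrudi_ne_zero (σ : Type*) [Fintype σ] [DecidableEq σ]
    (R : Type*) [CommRing R] (hlam : Antitone lam) (ε : Fin l → Bool)
    (hne : jacobiTrudi σ R (fun i => (lam i : ℤ) - (ε i).toNat) ≠ 0) :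
    Antitone (fun i => (lam i : ℤ) - (ε i).toNat) ∧ ∀ i, (ε i).toNat ≤ lam i := by
  have hanti := antitone_sub_of_forall_succ_ne hlam ε fun i j hij h =>
    hne (jacobiTrudi_eq_zero_of_succ_eq σ R _ hij h)
  refine ⟨hanti, fun i => ?_⟩
  have := i.isLt
  have hlast := hanti (show i ≤ ⟨l - 1, by omega⟩ from Fin.mk_le_mk.mpr (by omega))
  have := mt (jacobiTrudi_eq_zero_of_add_le σ R _ ⟨l - 1, by omega⟩) hne
  simp only at hlast this
  omega

theorem isVerticalStrip_sub_toNat (lam : Fin l → ℕ) (ε : Fin l → Bool) :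
    IsVerticalStrip lam fun i => lam i - (ε i).toNat :=
  fun i => ⟨Nat.sub_le _ _, by have := (ε i).toNat_le; dsimp only; omega⟩

theorem IsVerticalStrip.eq_add_toNat {μ : Fin l → ℕ} (h : IsVerticalStrip lam μ) (i : Fin l) :
    lam i = μ i + (decide (μ i < lam i)).toNat := by
  have := h i
  by_cases hi : μ i < lam i <;> simp [hi] <;> omega

theorem decide_sub_toNat_lt {n : ℕ} {b : Bool} (h : b.toNat ≤ n) :
    decide (n - b.toNat < n) = b := by
  cases b with
  | false => simp
  | true =>
    simp only [Bool.toNat_true, decide_eq_true_eq] at h ⊢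
    omega

theorem sum_verticalStrips_eq_sum_signs {M : Type*} [AddCommMonoid M] (lam : Fin l → ℕ)
    (F : ℕ → (Fin l → ℤ) → M) :
    ∑ μ ∈ (Finset.Iic lam).filter (fun μ => Antitone μ ∧ IsVerticalStrip lam μ),
        F ((∑ i, lam i) - ∑ i, μ i) (fun i => (μ i : ℤ))
      = ∑ ε ∈ Finset.univ.filter (fun ε : Fin l → Bool =>
          Antitone (fun i => (lam i : ℤ) - (ε i).toNat) ∧ ∀ i, (ε i).toNat ≤ lam i),
        F (∑ i, (ε i).toNat) (fun i => (lam i : ℤ) - (ε i).toNat) := by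
  have hstrip_signs {μ : Fin l → ℕ} (hμ : IsVerticalStrip lam μ) :
      (fun i => (lam i : ℤ) - (decide (μ i < lam i)).toNat) = fun i => (μ i : ℤ) := by
    funext i
    have := hμ.eq_add_toNat i
    omega
  refine Finset.sum_nbij' (fun μ i => decide (μ i < lam i)) (fun ε i => lam i - (ε i).toNat)
    ?_ ?_ ?_ ?_ ?_
  · simp only [Finset.mem_filter, Finset.mem_Iic, Finset.mem_univ, true_and]
    rintro μ ⟨-, hanti, hμ⟩
    rw [hstrip_signs hμ]
    refine ⟨fun i j hij => Int.ofNat_le.mpr (hanti hij), fun i => ?_⟩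
    have := hμ.eq_add_toNat i
    omega
  · simp only [Finset.mem_filter, Finset.mem_Iic, Finset.mem_univ, true_and]
    rintro ε ⟨hanti, hle⟩
    refine ⟨fun i => Nat.sub_le _ _, fun i j hij => ?_, isVerticalStrip_sub_toNat lam ε⟩
    have := hanti hij
    have := hle i
    have := hle j
    dsimp only at *
    omega
  · simp only [Finset.mem_filter, Finset.mem_Iic]
    rintro μ ⟨-, -, hμ⟩
    funext i
    have := hμ.eq_add_toNat i
    omega
  · simp only [Finset.mem_filter, Finset.mem_univ, true_and]
    rintro ε ⟨-, hle⟩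
    funext i
    exact decide_sub_toNat_lt (hle i)
  · simp only [Finset.mem_filter, Finset.mem_Iic]
    rintro μ ⟨-, -, hμ⟩
    rw [hstrip_signs hμ]
    congr 1
    rw [Finset.sum_congr rfl fun i _ => hμ.eq_add_toNat i, Finset.sum_add_distrib]
    omega

end strips

/-- **Schur polynomial at an alphabet minus one letter (cancellation form).**  For a
partition `λ`, `Σ_μ (-y)^{|λ| - |μ|} s_μ(x_1, …, x_m, y) = s_λ(x_1, …, x_m)`, summed over
all partitions `μ ⊆ λ` such that `λ/μ` is a vertical strip.  Here the variables are
`x_i = X i.castSucc` and `y = X (Fin.last m)`. -/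
theorem schur_remove_one_letter (R : Type*) [CommRing R] (m l : ℕ)
    (lam : Fin l → ℕ) (hlam : Antitone lam) :
    ∑ μ ∈ (Finset.Iic lam).filter (fun μ => Antitone μ ∧ IsVerticalStrip lam μ),
      (-(X (Fin.last m) : MvPolynomial (Fin (m + 1)) R)) ^ ((∑ i, lam i) - ∑ i, μ i) *
        jacobiTrudi (Fin (m + 1)) R (fun i => (μ i : ℤ))
      = rename Fin.castSucc (jacobiTrudi (Fin m) R (fun i => (lam i : ℤ))) := by
  rw [rename_castSucc_jacobiTrudi, ← Finset.sum_filter_of_ne fun ε _ hε =>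
    antitone_sub_and_toNat_le_of_jacobiTrudi_ne_zero _ R hlam ε (right_ne_zero_of_mul hε)]
  exact sum_verticalStrips_eq_sum_signs lam fun k α => (-X (Fin.last m)) ^ k * jacobiTrudi _ R α
end
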